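/- arXiv:1209.5504 — 7 statements merged into one kernel-verified Lean document; each statement's English description precedes it below -/
import Mathlib

section
/- Let h : T → ℝ be a quasisymmetric homeomorphism of an interval T ⊆ ℝ with quasisymmetric constant K ≥ 1. If I ⊆ J are two intervals in T sharing a single boundary point c, with |I|/|J| = α ≤ 1/2, then (1/(1+K))^{[log₂ α⁻¹]+1} ≤ |h(I)|/|h(J)| ≤ (1/(1+K⁻¹))^{[log₂ α⁻¹]}, where [·] denotes the integer part. -/
/-- If `I = Icc c b ⊆ J = Icc c e` share the single boundary point `c` and
`|I|/|J| = α ≤ 1/2`, then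
`(1/(1+K))^([log₂ α⁻¹]+1) ≤ |h(I)|/|h(J)| ≤ (1/(1+K⁻¹))^([log₂ α⁻¹])`. -/
theorem stmt_1 (t₀ t₁ c b e : ℝ) (h : ℝ → ℝ) (K : ℝ) (hK : 1 ≤ K)
    (hmono : StrictMonoOn h (Set.Icc t₀ t₁))
    (hqs : ∀ x δ : ℝ, 0 < δ → x - δ ∈ Set.Icc t₀ t₁ → x + δ ∈ Set.Icc t₀ t₁ →
      K⁻¹ ≤ (h (x + δ) - h x) / (h x - h (x - δ)) ∧
        (h (x + δ) - h x) / (h x - h (x - δ)) ≤ K)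
    (hcb : c < b) (hbe : b < e) (hJT : Set.Icc c e ⊆ Set.Icc t₀ t₁)
    (α : ℝ) (hα : α = (b - c) / (e - c)) (hαle : α ≤ 1 / 2) :
    (1 / (1 + K)) ^ (⌊Real.logb 2 α⁻¹⌋ + 1) ≤ (h b - h c) / (h e - h c) ∧
      (h b - h c) / (h e - h c) ≤ (1 / (1 + K⁻¹)) ^ ⌊Real.logb 2 α⁻¹⌋ := by
  have hce : c < e := hcb.trans hbe
  obtain ⟨L, hL⟩ : ∃ L : ℝ, L = e - c := ⟨e - c, rfl⟩
  have hLpos : 0 < L := by rw [hL]; linarith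
  have hαpos : 0 < α := by
    rw [hα, ← hL]; exact div_pos (by linarith) hLpos
  have hKpos : 0 < K := by linarith
  have hKinv : 0 < K⁻¹ := by positivity
  -- strict monotonicity on [c,e]
  have hlt : ∀ u v : ℝ, c ≤ u → u < v → v ≤ e → h u < h v := fun u v h1 h2 h3 =>
    hmono (hJT ⟨h1, by linarith⟩) (hJT ⟨by linarith, h3⟩) h2
  have hle : ∀ u v : ℝ, c ≤ u → u ≤ v → v ≤ e → h u ≤ h v := by
    intro u v h1 h2 h3
    rcases eq_or_lt_of_le h2 with rfl | h2
    · exact le_rfl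
    · exact (hlt u v h1 h2 h3).le
  have hec : 0 < h e - h c := by
    have := hlt c e le_rfl hce le_rfl; linarith
  -- the key halving estimate
  have key : ∀ p δ : ℝ, 0 < δ → p - δ = c → p + δ ≤ e →
      1 / (1 + K) ≤ (h p - h c) / (h (p + δ) - h c) ∧
        (h p - h c) / (h (p + δ) - h c) ≤ 1 / (1 + K⁻¹) := by
    intro p δ hδ hpc hpe
    have hcp : c < p := by linarith [hpc]
    have hpe' : p < p + δ := by linarith
    have hmem1 : p - δ ∈ Set.Icc t₀ t₁ := hJT ⟨by linarith, by linarith⟩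
    have hmem2 : p + δ ∈ Set.Icc t₀ t₁ := hJT ⟨by linarith, hpe⟩
    obtain ⟨h1, h2⟩ := hqs p δ hδ hmem1 hmem2
    rw [hpc] at h1 h2
    have hA : 0 < h p - h c := by
      have := hlt c p le_rfl hcp (by linarith); linarith
    have hB : 0 < h (p + δ) - h p := by
      have := hlt p (p + δ) hcp.le hpe' hpe; linarith
    have hAB : 0 < h (p + δ) - h c := by linarith
    have hu : h (p + δ) - h p ≤ K * (h p - h c) := by
      rwa [div_le_iff₀ hA] at h2
    have hl : K⁻¹ * (h p - h c) ≤ h (p + δ) - h p := by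
      rwa [le_div_iff₀ hA] at h1
    constructor
    · rw [div_le_div_iff₀ (by linarith) hAB]
      nlinarith
    · rw [div_le_div_iff₀ hAB (by linarith)]
      nlinarith
  -- the dyadic point iteration
  have hxmem : ∀ j : ℕ, c < c + L / 2 ^ j ∧ c + L / 2 ^ j ≤ e := by
    intro j
    have h2j : (1:ℝ) ≤ 2 ^ j := one_le_pow₀ (by norm_num)
    constructor
    · have h0 : (0:ℝ) < L / 2 ^ j := div_pos hLpos (by positivity)
      linarith
    · have h0 : L / 2 ^ j ≤ L := by
        rw [div_le_iff₀ (by positivity)]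
        nlinarith
      linarith
  have ind : ∀ j : ℕ, (1 / (1 + K)) ^ j ≤ (h (c + L / 2 ^ j) - h c) / (h e - h c) ∧
      (h (c + L / 2 ^ j) - h c) / (h e - h c) ≤ (1 / (1 + K⁻¹)) ^ j := by
    intro j
    induction j with
    | zero =>
      have h0 : c + L / 2 ^ 0 = e := by rw [hL]; ring
      rw [h0, div_self (ne_of_gt hec)]
      simp
    | succ j ih =>
      have hpd : c + L / 2 ^ (j + 1) + L / 2 ^ (j + 1) = c + L / 2 ^ j := by
        field_simp; ring
      have hstep := key (c + L / 2 ^ (j + 1)) (L / 2 ^ (j + 1)) (div_pos hLpos (by positivity))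
        (by ring) (by rw [hpd]; exact (hxmem j).2)
      rw [hpd] at hstep
      have hAj : 0 < h (c + L / 2 ^ j) - h c := by
        have := hlt c _ le_rfl (hxmem j).1 (hxmem j).2; linarith
      have hAj1 : 0 < h (c + L / 2 ^ (j + 1)) - h c := by
        have := hlt c _ le_rfl (hxmem (j + 1)).1 (hxmem (j + 1)).2; linarith
      have heq : ((h (c + L / 2 ^ (j + 1)) - h c) / (h (c + L / 2 ^ j) - h c)) *
            ((h (c + L / 2 ^ j) - h c) / (h e - h c)) =
          (h (c + L / 2 ^ (j + 1)) - h c) / (h e - h c) := by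
        rw [div_mul_div_cancel₀]; exact ne_of_gt hAj
      rw [← heq]
      constructor
      · rw [pow_succ (1 / (1 + K)) j, mul_comm ((1 / (1 + K)) ^ j)]
        exact mul_le_mul hstep.1 ih.1 (by positivity) (by positivity)
      · rw [pow_succ (1 / (1 + K⁻¹)) j, mul_comm ((1 / (1 + K⁻¹)) ^ j)]
        exact mul_le_mul hstep.2 ih.2 (by positivity)
          (le_trans (by positivity) hstep.2)
  -- relating α to the floor of the log
  set n : ℤ := ⌊Real.logb 2 α⁻¹⌋ with hn
  have hαinv : 0 < α⁻¹ := by positivity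
  have h2α : (2:ℝ) ≤ α⁻¹ := by
    rw [show α⁻¹ = 1 / α by simp, le_div_iff₀ hαpos]; linarith
  have hn1 : 1 ≤ n := by
    rw [hn]
    apply Int.le_floor.mpr
    push_cast
    calc (1:ℝ) = Real.logb 2 2 := (Real.logb_self_eq_one (by norm_num)).symm
    _ ≤ Real.logb 2 α⁻¹ := Real.logb_le_logb_of_le (by norm_num) (by norm_num) h2α
  set m : ℕ := n.toNat with hm
  have hmn : (m : ℤ) = n := Int.toNat_of_nonneg (by linarith)
  have hmnR : (m : ℝ) = (n : ℝ) := by exact_mod_cast congrArg (Int.cast : ℤ → ℝ) hmn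
  -- α ≤ 2⁻ᵐ
  have hub : (2:ℝ) ^ m ≤ α⁻¹ := by
    have h1 : (n : ℝ) ≤ Real.logb 2 α⁻¹ := Int.floor_le _
    calc (2:ℝ) ^ m = (2:ℝ) ^ (m : ℝ) := by rw [Real.rpow_natCast]
    _ ≤ (2:ℝ) ^ Real.logb 2 α⁻¹ := by
        apply (Real.rpow_le_rpow_left_iff (by norm_num)).mpr
        rw [hmnR]; exact h1
    _ = α⁻¹ := Real.rpow_logb (by norm_num) (by norm_num) hαinv
  have hαub : α * 2 ^ m ≤ 1 := by
    have := mul_le_mul_of_nonneg_left hub hαpos.le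
    rwa [mul_inv_cancel₀ (ne_of_gt hαpos)] at this
  -- 2⁻⁽ᵐ⁺¹⁾ < α
  have hlb : α⁻¹ < (2:ℝ) ^ (m + 1) := by
    have h2 : Real.logb 2 α⁻¹ < (n : ℝ) + 1 := Int.lt_floor_add_one _
    calc α⁻¹ = (2:ℝ) ^ Real.logb 2 α⁻¹ := (Real.rpow_logb (by norm_num) (by norm_num) hαinv).symm
    _ < (2:ℝ) ^ ((m : ℝ) + 1) := by
        apply (Real.rpow_lt_rpow_left_iff (by norm_num)).mpr
        rw [hmnR]; exact h2
    _ = (2:ℝ) ^ (m + 1) := by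
        rw [show ((m:ℝ) + 1) = ((m + 1 : ℕ) : ℝ) by push_cast; ring, Real.rpow_natCast]
  have hαlb : 1 < α * 2 ^ (m + 1) := by
    have := mul_lt_mul_of_pos_left hlb hαpos
    rwa [mul_inv_cancel₀ (ne_of_gt hαpos)] at this
  -- b is between the dyadic points x_{m+1} and x_m
  have hbc : b - c = α * L := by
    rw [hα, ← hL]; field_simp
  have hbub : b ≤ c + L / 2 ^ m := by
    have : α * L ≤ L / 2 ^ m := by
      rw [le_div_iff₀ (by positivity)]
      nlinarith
    linarith
  have hblb : c + L / 2 ^ (m + 1) ≤ b := by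
    have : L / 2 ^ (m + 1) ≤ α * L := by
      rw [div_le_iff₀ (by positivity)]
      nlinarith
    linarith
  have hhb1 : h b ≤ h (c + L / 2 ^ m) := hle b _ (by linarith) hbub (hxmem m).2
  have hhb2 : h (c + L / 2 ^ (m + 1)) ≤ h b := hle _ b (by linarith [(hxmem (m+1)).1]) hblb (by linarith)
  -- conclude
  have hexp1 : (1 / (1 + K)) ^ (n + 1) = (1 / (1 + K)) ^ ((m + 1 : ℕ)) := by
    rw [show n + 1 = ((m + 1 : ℕ) : ℤ) by omega, zpow_natCast]
  have hexp2 : (1 / (1 + K⁻¹)) ^ n = (1 / (1 + K⁻¹)) ^ (m : ℕ) := by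
    rw [← hmn, zpow_natCast]
  rw [hexp1, hexp2]
  constructor
  · calc (1 / (1 + K)) ^ (m + 1) ≤ (h (c + L / 2 ^ (m + 1)) - h c) / (h e - h c) :=
        (ind (m + 1)).1
    _ ≤ (h b - h c) / (h e - h c) := by gcongr
  · calc (h b - h c) / (h e - h c) ≤ (h (c + L / 2 ^ m) - h c) / (h e - h c) := by gcongr
    _ ≤ (1 / (1 + K⁻¹)) ^ m := (ind m).2
end

section
/- Let h : T → ℝ be a quasisymmetric homeomorphism with constant K ≥ 1. If I and J are two closed intervals in T whose intersection is a single common boundary point, with |I|/|J| = α < 1, then 1/((1+K)^{[log₂((1+α)/α)]+1} − 1) ≤ |h(I)|/|h(J)| ≤ 1/((1+K⁻¹)^{[log₂((1+α)/α)]} − 1). -/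
set_option maxHeartbeats 1000000


/-- If `I = Icc b c` and `J = Icc c e` are closed intervals in `T` whose
intersection is the single common boundary point `c`, with `|I|/|J| = α < 1`, then
`1/((1+K)^([log₂((1+α)/α)]+1) − 1) ≤ |h(I)|/|h(J)| ≤ 1/((1+K⁻¹)^([log₂((1+α)/α)]) − 1)`. -/
theorem stmt_2 (t₀ t₁ b c e : ℝ) (h : ℝ → ℝ) (K : ℝ) (hK : 1 ≤ K)
    (hmono : StrictMonoOn h (Set.Icc t₀ t₁))
    (hqs : ∀ x δ : ℝ, 0 < δ → x - δ ∈ Set.Icc t₀ t₁ → x + δ ∈ Set.Icc t₀ t₁ →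
      K⁻¹ ≤ (h (x + δ) - h x) / (h x - h (x - δ)) ∧
        (h (x + δ) - h x) / (h x - h (x - δ)) ≤ K)
    (hbc : b < c) (hce : c < e) (hT : Set.Icc b e ⊆ Set.Icc t₀ t₁)
    (α : ℝ) (hα : α = (c - b) / (e - c)) (hα1 : α < 1) :
    1 / ((1 + K) ^ (⌊Real.logb 2 ((1 + α) / α)⌋ + 1) - 1) ≤ (h c - h b) / (h e - h c) ∧
      (h c - h b) / (h e - h c) ≤ 1 / ((1 + K⁻¹) ^ ⌊Real.logb 2 ((1 + α) / α)⌋ - 1) := by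
  have hbe : b < e := hbc.trans hce
  have hL : (0:ℝ) < c - b := by linarith
  have hD : (0:ℝ) < e - c := by linarith
  have hα0 : 0 < α := by rw [hα]; positivity
  have hK0 : (0:ℝ) < K := by linarith
  have hKi : (0:ℝ) < K⁻¹ := by positivity
  have hKi1 : K⁻¹ ≤ 1 := by
    rw [inv_le_one_iff₀]; right; exact hK
  have hα' : c - b = α * (e - c) := by rw [hα]; field_simp
  have hmem : ∀ x, b ≤ x → x ≤ e → x ∈ Set.Icc t₀ t₁ := fun x h1 h2 => hT ⟨h1, h2⟩
  have hlt : ∀ u v, b ≤ u → u < v → v ≤ e → h u < h v := fun u v h1 h2 h3 =>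
    hmono (hmem u h1 (by linarith)) (hmem v (by linarith) h3) h2
  have hle' : ∀ u v, b ≤ u → u ≤ v → v ≤ e → h u ≤ h v := by
    intro u v h1 h2 h3
    rcases eq_or_lt_of_le h2 with rfl | h2
    · exact le_rfl
    · exact (hlt u v h1 h2 h3).le
  have hA : 0 < h c - h b := sub_pos.mpr (hlt b c le_rfl hbc hce.le)
  have hE : 0 < h e - h c := sub_pos.mpr (hlt c e hbc.le hce le_rfl)
  set n := ⌊Real.logb 2 ((1 + α) / α)⌋ with hn
  have ht0 : (0:ℝ) < (1 + α) / α := by positivity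
  have hratio2 : (2:ℝ) ≤ (1 + α) / α := by
    rw [le_div_iff₀ hα0]; linarith
  have hn1 : 1 ≤ n := by
    rw [hn, Int.le_floor]
    rw [Real.le_logb_iff_rpow_le one_lt_two ht0]
    rw [show (((1:ℤ)):ℝ) = (1:ℝ) by norm_num, Real.rpow_one]
    exact hratio2
  set N := n.toNat with hNdef
  have hN : (N : ℤ) = n := Int.toNat_of_nonneg (by linarith)
  have hN1 : 1 ≤ N := by omega
  -- 2^N ≤ (1+α)/α < 2^(N+1)
  have h2N : (2:ℝ) ^ N ≤ (1 + α) / α := by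
    have h1 : ((n:ℝ)) ≤ Real.logb 2 ((1 + α) / α) := Int.floor_le _
    have h2 : (2:ℝ) ^ ((n:ℝ)) ≤ (2:ℝ) ^ Real.logb 2 ((1 + α) / α) :=
      Real.rpow_le_rpow_of_exponent_le one_le_two h1
    rw [Real.rpow_logb (by norm_num) (by norm_num) ht0] at h2
    calc (2:ℝ) ^ N = (2:ℝ) ^ ((N:ℝ)) := (Real.rpow_natCast 2 N).symm
    _ = (2:ℝ) ^ ((n:ℝ)) := by rw [← hN]; norm_num
    _ ≤ _ := h2
  have h2N1 : (1 + α) / α < (2:ℝ) ^ (N + 1) := by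
    have h1 : Real.logb 2 ((1 + α) / α) < ((n:ℝ)) + 1 := Int.lt_floor_add_one _
    have h2 : (2:ℝ) ^ Real.logb 2 ((1 + α) / α) < (2:ℝ) ^ ((n:ℝ) + 1) :=
      Real.rpow_lt_rpow_of_exponent_lt one_lt_two h1
    rw [Real.rpow_logb (by norm_num) (by norm_num) ht0] at h2
    calc (1 + α) / α < (2:ℝ) ^ ((n:ℝ) + 1) := h2
    _ = (2:ℝ) ^ (((N + 1 : ℕ) : ℝ)) := by rw [← hN]; push_cast; ring_nf
    _ = (2:ℝ) ^ (N + 1) := Real.rpow_natCast 2 (N + 1)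
  -- geometric endpoint bounds
  have hxN : c + ((2:ℝ) ^ N - 1) * (c - b) ≤ e := by
    have h1 : (2:ℝ) ^ N * α ≤ 1 + α := (le_div_iff₀ hα0).mp h2N
    have h2 : ((2:ℝ) ^ N - 1) * α ≤ 1 := by linarith
    have h3 := mul_le_mul_of_nonneg_right h2 hD.le
    rw [hα']; nlinarith
  have hxN1 : e < c + ((2:ℝ) ^ (N + 1) - 1) * (c - b) := by
    have h1 : 1 + α < (2:ℝ) ^ (N + 1) * α := (div_lt_iff₀ hα0).mp h2N1
    have h2 : 1 < ((2:ℝ) ^ (N + 1) - 1) * α := by linarith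
    have h3 := mul_lt_mul_of_pos_right h2 hD
    rw [hα']; nlinarith
  -- upward geometric claim
  have claimU : ∀ k : ℕ, c + ((2:ℝ) ^ k - 1) * (c - b) ≤ e →
      (1 + K⁻¹) ^ k * (h c - h b) ≤ h (c + ((2:ℝ) ^ k - 1) * (c - b)) - h b := by
    intro k
    induction k with
    | zero => intro _; norm_num
    | succ k ih =>
      intro hk1
      have hpk : (1:ℝ) ≤ 2 ^ k := one_le_pow₀ one_le_two
      have hpk1 : (2:ℝ) ^ k ≤ 2 ^ (k+1) := by
        rw [pow_succ]; nlinarith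
      have hk0 : c + ((2:ℝ) ^ k - 1) * (c - b) ≤ e := by nlinarith
      have ihv := ih hk0
      set xk := c + ((2:ℝ) ^ k - 1) * (c - b) with hxk
      have e1 : xk - 2 ^ k * (c - b) = b := by rw [hxk]; ring
      have e2 : xk + 2 ^ k * (c - b) = c + ((2:ℝ) ^ (k+1) - 1) * (c - b) := by
        rw [hxk]; ring
      have hxkb : b < xk := by rw [hxk]; nlinarith
      have hxke : xk ≤ e := hk0
      have hpk2 : (1:ℝ) ≤ 2 ^ (k+1) := one_le_pow₀ one_le_two
      have hb1 : b ≤ c + ((2:ℝ) ^ (k+1) - 1) * (c - b) := by nlinarith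
      have hδpos : (0:ℝ) < 2 ^ k * (c - b) := by positivity
      have hm1 : xk - 2 ^ k * (c - b) ∈ Set.Icc t₀ t₁ := by
        rw [e1]; exact hmem b le_rfl hbe.le
      have hm2 : xk + 2 ^ k * (c - b) ∈ Set.Icc t₀ t₁ := by
        rw [e2]; exact hmem _ hb1 hk1
      have hqs' := (hqs xk (2 ^ k * (c - b)) hδpos hm1 hm2).1
      rw [e1, e2] at hqs'
      have hden : 0 < h xk - h b := sub_pos.mpr (hlt b xk le_rfl hxkb hxke)
      have hstep : K⁻¹ * (h xk - h b) ≤ h (c + ((2:ℝ) ^ (k+1) - 1) * (c - b)) - h xk :=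
        (le_div_iff₀ hden).mp hqs'
      calc (1 + K⁻¹) ^ (k + 1) * (h c - h b)
          = (1 + K⁻¹) * ((1 + K⁻¹) ^ k * (h c - h b)) := by ring
        _ ≤ (1 + K⁻¹) * (h xk - h b) :=
            mul_le_mul_of_nonneg_left ihv (by positivity)
        _ = (h xk - h b) + K⁻¹ * (h xk - h b) := by ring
        _ ≤ (h xk - h b) + (h (c + ((2:ℝ) ^ (k+1) - 1) * (c - b)) - h xk) := by
            linarith
        _ = h (c + ((2:ℝ) ^ (k+1) - 1) * (c - b)) - h b := by ring
  -- downward geometric claim (with escape clause)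
  have claimD : ∀ k : ℕ, h e - h b ≤ (1 + K) ^ k * (h c - h b) ∨
      (c + ((2:ℝ) ^ k - 1) * (c - b) ≤ e ∧
        h (c + ((2:ℝ) ^ k - 1) * (c - b)) - h b ≤ (1 + K) ^ k * (h c - h b)) := by
    intro k
    induction k with
    | zero =>
        right
        rw [show c + ((2:ℝ) ^ 0 - 1) * (c - b) = c by norm_num]
        exact ⟨by linarith, by norm_num⟩
    | succ k ih =>
      have hpow1 : (1 + K) ^ k ≤ (1 + K) ^ (k+1) :=
        pow_le_pow_right₀ (by linarith) (by omega)
      have hmono2 : (1 + K) ^ k * (h c - h b) ≤ (1 + K) ^ (k+1) * (h c - h b) :=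
        mul_le_mul_of_nonneg_right hpow1 hA.le
      rcases ih with hl | ⟨hxke, hbd⟩
      · left; linarith
      · set xk := c + ((2:ℝ) ^ k - 1) * (c - b) with hxk
        have hpk : (1:ℝ) ≤ 2 ^ k := one_le_pow₀ one_le_two
        have hxkb : b < xk := by rw [hxk]; nlinarith
        have e0 : xk - b = 2 ^ k * (c - b) := by rw [hxk]; ring
        by_cases hcase : c + ((2:ℝ) ^ (k+1) - 1) * (c - b) ≤ e
        · -- full step
          right
          refine ⟨hcase, ?_⟩
          have e1 : xk - 2 ^ k * (c - b) = b := by rw [hxk]; ring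
          have e2 : xk + 2 ^ k * (c - b) = c + ((2:ℝ) ^ (k+1) - 1) * (c - b) := by
            rw [hxk]; ring
          have hpk2 : (1:ℝ) ≤ 2 ^ (k+1) := one_le_pow₀ one_le_two
          have hb1 : b ≤ c + ((2:ℝ) ^ (k+1) - 1) * (c - b) := by nlinarith
          have hδpos : (0:ℝ) < 2 ^ k * (c - b) := by positivity
          have hm1 : xk - 2 ^ k * (c - b) ∈ Set.Icc t₀ t₁ := by
            rw [e1]; exact hmem b le_rfl hbe.le
          have hm2 : xk + 2 ^ k * (c - b) ∈ Set.Icc t₀ t₁ := by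
            rw [e2]; exact hmem _ hb1 hcase
          have hqs' := (hqs xk (2 ^ k * (c - b)) hδpos hm1 hm2).2
          rw [e1, e2] at hqs'
          have hden : 0 < h xk - h b := sub_pos.mpr (hlt b xk le_rfl hxkb hxke)
          have hstep : h (c + ((2:ℝ) ^ (k+1) - 1) * (c - b)) - h xk ≤ K * (h xk - h b) :=
            (div_le_iff₀ hden).mp hqs'
          calc h (c + ((2:ℝ) ^ (k+1) - 1) * (c - b)) - h b
              = (h (c + ((2:ℝ) ^ (k+1) - 1) * (c - b)) - h xk) + (h xk - h b) := by ring
            _ ≤ K * (h xk - h b) + (h xk - h b) := by linarith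
            _ = (1 + K) * (h xk - h b) := by ring
            _ ≤ (1 + K) * ((1 + K) ^ k * (h c - h b)) :=
                mul_le_mul_of_nonneg_left hbd (by positivity)
            _ = (1 + K) ^ (k + 1) * (h c - h b) := by ring
        · -- partial step to e
          left
          push_neg at hcase
          rcases eq_or_lt_of_le hxke with heq | hlt2
          · rw [heq] at hbd; linarith
          · set δ := e - xk with hδ
            have hδ0 : 0 < δ := by rw [hδ]; linarith
            have hδsmall : δ < 2 ^ k * (c - b) := by
              rw [hδ, hxk]
              have : e < c + ((2:ℝ) ^ (k+1) - 1) * (c - b) := hcase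
              nlinarith [pow_succ (2:ℝ) k]
            have hxd : b < xk - δ := by nlinarith [e0]
            have e2 : xk + δ = e := by rw [hδ]; ring
            have hm1 : xk - δ ∈ Set.Icc t₀ t₁ := hmem _ (by linarith) (by linarith)
            have hm2 : xk + δ ∈ Set.Icc t₀ t₁ := by
              rw [e2]; exact hmem e hbe.le le_rfl
            have hqs' := (hqs xk δ hδ0 hm1 hm2).2
            rw [e2] at hqs'
            have hden : 0 < h xk - h (xk - δ) :=
              sub_pos.mpr (hlt (xk - δ) xk (by linarith) (by linarith) hxke)
            have hstep : h e - h xk ≤ K * (h xk - h (xk - δ)) :=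
              (div_le_iff₀ hden).mp hqs'
            have hbxd : h b ≤ h (xk - δ) := hle' b (xk - δ) le_rfl (by linarith) (by linarith)
            have hK2 : K * (h xk - h (xk - δ)) ≤ K * (h xk - h b) :=
              mul_le_mul_of_nonneg_left (by linarith) hK0.le
            calc h e - h b = (h e - h xk) + (h xk - h b) := by ring
              _ ≤ K * (h xk - h b) + (h xk - h b) := by linarith
              _ = (1 + K) * (h xk - h b) := by ring
              _ ≤ (1 + K) * ((1 + K) ^ k * (h c - h b)) :=
                  mul_le_mul_of_nonneg_left hbd (by positivity)
              _ = (1 + K) ^ (k + 1) * (h c - h b) := by ring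
  -- assemble upper bound
  have hUp := claimU N hxN
  have hhe : h (c + ((2:ℝ) ^ N - 1) * (c - b)) ≤ h e := by
    have hpk : (1:ℝ) ≤ 2 ^ N := one_le_pow₀ one_le_two
    exact hle' _ e (by nlinarith) hxN le_rfl
  have hpowU : (1:ℝ) < (1 + K⁻¹) ^ N :=
    one_lt_pow₀ (by linarith) (by omega)
  have hUfinal : ((1 + K⁻¹) ^ N - 1) * (h c - h b) ≤ h e - h c := by nlinarith
  -- assemble lower bound
  have hDown : h e - h b ≤ (1 + K) ^ (N + 1) * (h c - h b) := by
    rcases claimD (N + 1) with hl | ⟨hxe, _⟩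
    · exact hl
    · exact absurd hxe (not_le.mpr hxN1)
  have hpowD : (1:ℝ) < (1 + K) ^ (N + 1) :=
    one_lt_pow₀ (by linarith) (by omega)
  have hDfinal : h e - h c ≤ ((1 + K) ^ (N + 1) - 1) * (h c - h b) := by nlinarith
  -- convert zpow to pow
  have hz1 : (1 + K) ^ (n + 1) = (1 + K) ^ ((N + 1 : ℕ)) := by
    have : n + 1 = ((N + 1 : ℕ) : ℤ) := by push_cast [hN]; ring
    rw [this, zpow_natCast]
  have hz2 : (1 + K⁻¹) ^ n = (1 + K⁻¹) ^ (N : ℕ) := by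
    rw [← hN, zpow_natCast]
  rw [hz1, hz2]
  constructor
  · rw [div_le_div_iff₀ (by linarith) hE]
    nlinarith
  · rw [div_le_div_iff₀ hE (by linarith)]
    nlinarith
end

section
/- Let h : T → ℝ be a quasisymmetric homeomorphism with constant K ≥ 1. Let I ⊆ J be intervals in T sharing a single boundary point with |I|/|J| = α > 1/2, and suppose the closed interval Ĩ of length |I| sharing one endpoint with I and containing J∖I satisfies Ĩ ⊂ T. Then 1/(K·(1/(1+K⁻¹))^{[log₂(α/(1−α))]} + 1) ≤ |h(I)|/|h(J)| ≤ 1/(K⁻¹·(1/(1+K))^{log₂(α/(1−α))+1} + 1). -/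
/-!
Write `d = e - b` and `n = ⌊log₂ ((b - c) / d)⌋`, so that `2 ^ n * d ≤ b - c < 2 ^ (n + 1) * d`.
Quasisymmetry at `b + 2 ^ k * d` with step `2 ^ k * d` shows that doubling an interval with left
endpoint `b` multiplies the length of its image by at least `1 + K⁻¹`, and doubling an interval
with right endpoint `b` multiplies it by at most `1 + K`. Comparing `[b, e]` with `[b, b + 2 ^ n d]`
(whose image is at most `K |h(I)|`, by quasisymmetry at `b` with step `b - c`) and with
`[b - 2 ^ n d, b]`, which covers more than half of `I`, gives
`Q ≤ K (1 + K⁻¹)⁻ⁿ P` and `P ≤ K (1 + K) ^ (n + 1) Q` for `P = |h(I)|`, `Q = |h[b, e]|`;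
the bounds on `P / (P + Q) = |h(I)| / |h(J)|` follow.
-/

open Set

/-- The quasisymmetry ratio bounds with denominators cleared, which avoids the junk value of
`x / 0`. -/
def QuasisymmOn (h : ℝ → ℝ) (K : ℝ) (s : Set ℝ) : Prop :=
  ∀ x δ, 0 < δ → x - δ ∈ s → x + δ ∈ s →
    h x - h (x - δ) ≤ K * (h (x + δ) - h x) ∧ h (x + δ) - h x ≤ K * (h x - h (x - δ))

theorem quasisymmOn_of_ratio_bounds {h : ℝ → ℝ} {K : ℝ} {s : Set ℝ} [hs : s.OrdConnected]
    (hK : 0 < K) (hmono : StrictMonoOn h s)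
    (hqs : ∀ x δ : ℝ, 0 < δ → x - δ ∈ s → x + δ ∈ s →
      K⁻¹ ≤ (h (x + δ) - h x) / (h x - h (x - δ)) ∧
        (h (x + δ) - h x) / (h x - h (x - δ)) ≤ K) :
    QuasisymmOn h K s := by
  intro x δ hδ hl hr
  have hx : x ∈ s := hs.out hl hr ⟨by linarith, by linarith⟩
  have hpos : 0 < h x - h (x - δ) := sub_pos.2 (hmono hl hx (by linarith))
  obtain ⟨hlo, hhi⟩ := hqs x δ hδ hl hr
  rw [le_div_iff₀ hpos, inv_mul_le_iff₀ hK] at hlo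
  exact ⟨hlo, (div_le_iff₀ hpos).1 hhi⟩

theorem QuasisymmOn.mono {h : ℝ → ℝ} {K : ℝ} {s t : Set ℝ} (hqs : QuasisymmOn h K t)
    (hst : s ⊆ t) : QuasisymmOn h K s :=
  fun x δ hδ hl hr => hqs x δ hδ (hst hl) (hst hr)

theorem Real.exists_nat_floor_logb_eq {b r : ℝ} (hb : 1 < b) (hr : 1 ≤ r) :
    ∃ n : ℕ, ⌊Real.logb b r⌋ = n ∧ b ^ n ≤ r ∧ r < b ^ (n + 1) := by
  obtain ⟨n, hn⟩ := Int.eq_ofNat_of_zero_le (Int.floor_nonneg.2 (Real.logb_nonneg hb hr))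
  have hle := Int.floor_le (Real.logb b r)
  have hlt := Int.lt_floor_add_one (Real.logb b r)
  rw [hn, Int.cast_natCast] at hle hlt
  refine ⟨n, hn, ?_, ?_⟩
  · rwa [← Real.rpow_natCast, ← Real.le_logb_iff_rpow_le hb (by linarith)]
  · rwa [← Real.rpow_natCast, ← Real.logb_lt_iff_lt_rpow hb (by linarith), Nat.cast_succ]

theorem one_div_add_one_le_div_add {a P Q : ℝ} (ha : 0 ≤ a) (hP : 0 < P) (hQ : 0 ≤ Q)
    (hQP : Q ≤ a * P) : 1 / (a + 1) ≤ P / (Q + P) := by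
  rw [div_le_div_iff₀ (by positivity) (by positivity)]
  linarith

theorem div_add_le_one_div_add_one {a P Q : ℝ} (ha : 0 ≤ a) (hP : 0 < P) (hQ : 0 ≤ Q)
    (hPQ : a * P ≤ Q) : P / (Q + P) ≤ 1 / (a + 1) := by
  rw [div_le_div_iff₀ (by positivity) (by positivity)]
  linarith

namespace QuasisymmOn

variable {h : ℝ → ℝ} {K p q : ℝ}

theorem one_add_inv_pow_mul_le (hqs : QuasisymmOn h K (Icc p q)) (hK : 0 < K) {b d : ℝ}
    (hpb : p ≤ b) (hd : 0 < d) :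
    ∀ k : ℕ, b + 2 ^ k * d ≤ q → (1 + K⁻¹) ^ k * (h (b + d) - h b) ≤ h (b + 2 ^ k * d) - h b
  | 0, _ => by simp
  | k + 1, hq => by
    have hδ : 0 < 2 ^ k * d := by positivity
    have hdouble : 2 ^ (k + 1) * d = 2 ^ k * d + 2 ^ k * d := by ring
    have ih := one_add_inv_pow_mul_le hqs hK hpb hd k (by linarith)
    have hstep := (hqs (b + 2 ^ k * d) (2 ^ k * d) hδ ⟨by linarith, by linarith⟩
      ⟨by linarith, by linarith⟩).1
    rw [add_sub_cancel_right, add_assoc, ← hdouble, ← inv_mul_le_iff₀ hK] at hstep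
    calc (1 + K⁻¹) ^ (k + 1) * (h (b + d) - h b)
        = (1 + K⁻¹) * ((1 + K⁻¹) ^ k * (h (b + d) - h b)) := by ring
      _ ≤ (1 + K⁻¹) * (h (b + 2 ^ k * d) - h b) := by gcongr
      _ ≤ h (b + 2 ^ (k + 1) * d) - h b := by linarith

theorem sub_le_mul_one_add_pow_mul (hqs : QuasisymmOn h K (Icc p q)) (hK : 0 ≤ K) {b d : ℝ}
    (hd : 0 < d) (hbq : b + d ≤ q) :
    ∀ k : ℕ, p ≤ b - 2 ^ k * d → h b - h (b - 2 ^ k * d) ≤ K * (1 + K) ^ k * (h (b + d) - h b)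
  | 0, hp => by simpa using (hqs b d hd ⟨by simpa using hp, by linarith⟩ ⟨by linarith, hbq⟩).1
  | k + 1, hp => by
    have hδ : 0 < 2 ^ k * d := by positivity
    have hdouble : 2 ^ (k + 1) * d = 2 ^ k * d + 2 ^ k * d := by ring
    have ih := sub_le_mul_one_add_pow_mul hqs hK hd hbq k (by linarith)
    have hstep := (hqs (b - 2 ^ k * d) (2 ^ k * d) hδ ⟨by linarith, by linarith⟩
      ⟨by linarith, by linarith⟩).1
    rw [sub_add_cancel, sub_sub, ← hdouble] at hstep
    calc h b - h (b - 2 ^ (k + 1) * d)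
        ≤ (1 + K) * (h b - h (b - 2 ^ k * d)) := by linarith
      _ ≤ (1 + K) * (K * (1 + K) ^ k * (h (b + d) - h b)) := by gcongr
      _ = K * (1 + K) ^ (k + 1) * (h (b + d) - h b) := by ring

theorem sub_le_mul_sub_of_two_mul_sub_le (hqs : QuasisymmOn h K (Icc p q))
    (hmono : MonotoneOn h (Icc p q)) (hK : 0 ≤ K) {c x b : ℝ} (hpc : p ≤ c) (hcx : c ≤ x)
    (hxb : 2 * x - c ≤ b) (hbq : b ≤ q) : h x - h c ≤ K * (h b - h x) := by
  rcases hcx.eq_or_lt with rfl | hcx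
  · rw [sub_self]
    exact mul_nonneg hK (sub_nonneg.2 (hmono ⟨hpc, by linarith⟩ ⟨by linarith, hbq⟩ (by linarith)))
  have hstep := (hqs x (x - c) (sub_pos.2 hcx) ⟨by linarith, by linarith⟩
    ⟨by linarith, by linarith⟩).1
  rw [sub_sub_cancel] at hstep
  calc h x - h c ≤ K * (h (x + (x - c)) - h x) := hstep
    _ ≤ K * (h b - h x) := by
      gcongr
      exact hmono ⟨by linarith, by linarith⟩ ⟨by linarith, hbq⟩ (by linarith)

theorem one_add_inv_pow_mul_le_mul {c b e : ℝ} (hqs : QuasisymmOn h K (Icc c (2 * b - c)))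
    (hmono : MonotoneOn h (Icc c (2 * b - c))) (hK : 0 < K) (hcb : c < b) (hbe : b < e)
    (n : ℕ) (hn : 2 ^ n * (e - b) ≤ b - c) :
    (1 + K⁻¹) ^ n * (h e - h b) ≤ K * (h b - h c) := by
  have hδ : 0 < 2 ^ n * (e - b) := mul_pos (by positivity) (sub_pos.2 hbe)
  have hgrow := hqs.one_add_inv_pow_mul_le hK (b := b) (d := e - b) (by linarith) (by linarith) n
    (by linarith)
  have hright := (hqs b (b - c) (by linarith) ⟨by linarith, by linarith⟩
    ⟨by linarith, by linarith⟩).2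
  rw [add_sub_cancel] at hgrow
  rw [sub_sub_cancel] at hright
  calc (1 + K⁻¹) ^ n * (h e - h b) ≤ h (b + 2 ^ n * (e - b)) - h b := hgrow
    _ ≤ h (b + (b - c)) - h b := by
      gcongr
      exact hmono ⟨by linarith, by linarith⟩ ⟨by linarith, by linarith⟩ (by linarith)
    _ ≤ K * (h b - h c) := hright

theorem le_mul_one_add_pow_mul {c b e : ℝ} (hqs : QuasisymmOn h K (Icc c e))
    (hmono : MonotoneOn h (Icc c e)) (hK : 0 ≤ K) (hbe : b < e) (n : ℕ)
    (hn : 2 ^ n * (e - b) ≤ b - c) (hn' : b - c ≤ 2 ^ (n + 1) * (e - b)) :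
    h b - h c ≤ K * (1 + K) ^ (n + 1) * (h e - h b) := by
  set x := b - 2 ^ n * (e - b)
  have hdouble : 2 ^ (n + 1) * (e - b) = 2 * (2 ^ n * (e - b)) := by ring
  have hshrink := hqs.sub_le_mul_one_add_pow_mul hK (b := b) (d := e - b) (by linarith)
    (by linarith) n (by linarith)
  have hleft := hqs.sub_le_mul_sub_of_two_mul_sub_le hmono hK le_rfl (x := x) (b := b)
    (by linarith) (by linarith) hbe.le
  rw [add_sub_cancel] at hshrink
  calc h b - h c ≤ (1 + K) * (h b - h x) := by linarith
    _ ≤ (1 + K) * (K * (1 + K) ^ n * (h e - h b)) := by gcongr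
    _ = K * (1 + K) ^ (n + 1) * (h e - h b) := by ring

theorem sub_div_sub_bounds {c b e : ℝ} (hqs : QuasisymmOn h K (Icc c (2 * b - c)))
    (hmono : StrictMonoOn h (Icc c (2 * b - c))) (hK : 1 ≤ K) (hcb : c < b) (hbe : b < e)
    (he : e ≤ 2 * b - c) :
    1 / (K * (1 / (1 + K⁻¹)) ^ ⌊Real.logb 2 ((b - c) / (e - b))⌋ + 1) ≤
        (h b - h c) / (h e - h c) ∧
      (h b - h c) / (h e - h c) ≤
        1 / (K⁻¹ * (1 / (1 + K)) ^ (Real.logb 2 ((b - c) / (e - b)) + 1) + 1) := by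
  have hK0 : 0 < K := by linarith
  have heb : 0 < e - b := sub_pos.2 hbe
  have hJ : Icc c e ⊆ Icc c (2 * b - c) := Icc_subset_Icc_right he
  obtain ⟨n, hfloor, hlow, hhigh⟩ :=
    Real.exists_nat_floor_logb_eq (r := (b - c) / (e - b)) one_lt_two
      ((one_le_div heb).2 (by linarith))
  have hnL : (n : ℝ) ≤ Real.logb 2 ((b - c) / (e - b)) := by
    exact_mod_cast hfloor ▸ Int.floor_le _
  rw [le_div_iff₀ heb] at hlow
  rw [div_lt_iff₀ heb] at hhigh
  have hP : 0 < h b - h c := sub_pos.2 (hmono ⟨le_rfl, by linarith⟩ ⟨hcb.le, by linarith⟩ hcb)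
  have hQ : 0 < h e - h b := sub_pos.2 (hmono ⟨hcb.le, by linarith⟩ ⟨by linarith, he⟩ hbe)
  rw [show h e - h c = (h e - h b) + (h b - h c) by ring, hfloor]
  constructor
  · apply one_div_add_one_le_div_add (by positivity) hP hQ.le
    have := hqs.one_add_inv_pow_mul_le_mul hmono.monotoneOn hK0 hcb hbe n hlow
    rw [zpow_natCast, one_div_pow, mul_one_div, div_mul_eq_mul_div, le_div_iff₀ (by positivity)]
    linarith
  · apply div_add_le_one_div_add_one (by positivity) hP hQ.le
    have := (hqs.mono hJ).le_mul_one_add_pow_mul (hmono.monotoneOn.mono hJ) hK0.le hbe n hlow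
      hhigh.le
    have hpow :
        (1 / (1 + K)) ^ (Real.logb 2 ((b - c) / (e - b)) + 1) ≤ 1 / (1 + K) ^ (n + 1) := by
      rw [← one_div_pow, ← Real.rpow_natCast, Nat.cast_succ]
      exact Real.rpow_le_rpow_of_exponent_ge (by positivity)
        ((div_le_one (by positivity)).2 (by linarith)) (by linarith)
    calc K⁻¹ * (1 / (1 + K)) ^ (Real.logb 2 ((b - c) / (e - b)) + 1) * (h b - h c)
        ≤ K⁻¹ * (1 / (1 + K) ^ (n + 1)) * (K * (1 + K) ^ (n + 1) * (h e - h b)) := by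
          gcongr
      _ = h e - h b := by field_simp

end QuasisymmOn

theorem stmt_3_general (t₀ t₁ c b e : ℝ) (h : ℝ → ℝ) (K : ℝ) (hK : 1 ≤ K)
    (hmono : StrictMonoOn h (Set.Icc t₀ t₁))
    (hqs : ∀ x δ : ℝ, 0 < δ → x - δ ∈ Set.Icc t₀ t₁ → x + δ ∈ Set.Icc t₀ t₁ →
      K⁻¹ ≤ (h (x + δ) - h x) / (h x - h (x - δ)) ∧
        (h (x + δ) - h x) / (h x - h (x - δ)) ≤ K)
    (hcb : c < b) (hbe : b < e) (hJT : Set.Icc c e ⊆ Set.Icc t₀ t₁)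
    (α : ℝ) (hα : α = (b - c) / (e - c)) (hαgt : 1 / 2 < α)
    (htilde : Set.Icc b (2 * b - c) ⊆ Set.Icc t₀ t₁) :
    1 / (K * (1 / (1 + K⁻¹)) ^ ⌊Real.logb 2 (α / (1 - α))⌋ + 1) ≤ (h b - h c) / (h e - h c) ∧
      (h b - h c) / (h e - h c) ≤
        1 / (K⁻¹ * (1 / (1 + K)) ^ (Real.logb 2 (α / (1 - α)) + 1) + 1) := by
  have hec : e - c ≠ 0 := by linarith
  rw [hα, lt_div_iff₀ (by linarith)] at hαgt
  have hsub : Icc c (2 * b - c) ⊆ Icc t₀ t₁ := fun x hx =>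
    (le_total x e).elim (fun hxe => hJT ⟨hx.1, hxe⟩) (fun hex => htilde ⟨by linarith, hx.2⟩)
  have hqs' := (quasisymmOn_of_ratio_bounds (by linarith) hmono hqs).mono hsub
  rw [hα, one_sub_div hec, div_div_div_cancel_right₀ hec, sub_sub_sub_cancel_right]
  exact hqs'.sub_div_sub_bounds (hmono.mono hsub) hK hcb hbe (by linarith)

/-- If `I = Icc c b ⊆ J = Icc c e` share the single boundary point `c`,
`|I|/|J| = α > 1/2` (and `α < 1`, since the boundary point is single), and the interval
`Ĩ = Icc b (2b − c)` of length `|I|`, sharing the endpoint `b` with `I` and containing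
`J ∖ I`, lies in `T`, then
`1/(K(1/(1+K⁻¹))^([log₂(α/(1−α))]) + 1) ≤ |h(I)|/|h(J)|
   ≤ 1/(K⁻¹(1/(1+K))^(log₂(α/(1−α))+1) + 1)`. -/
theorem stmt_3 (t₀ t₁ c b e : ℝ) (h : ℝ → ℝ) (K : ℝ) (hK : 1 ≤ K)
    (hmono : StrictMonoOn h (Set.Icc t₀ t₁))
    (hqs : ∀ x δ : ℝ, 0 < δ → x - δ ∈ Set.Icc t₀ t₁ → x + δ ∈ Set.Icc t₀ t₁ →
      K⁻¹ ≤ (h (x + δ) - h x) / (h x - h (x - δ)) ∧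
        (h (x + δ) - h x) / (h x - h (x - δ)) ≤ K)
    (hcb : c < b) (hbe : b < e) (hJT : Set.Icc c e ⊆ Set.Icc t₀ t₁)
    (α : ℝ) (hα : α = (b - c) / (e - c)) (hαgt : 1 / 2 < α) (hα1 : α < 1)
    (htilde : Set.Icc b (2 * b - c) ⊆ Set.Icc t₀ t₁) :
    1 / (K * (1 / (1 + K⁻¹)) ^ ⌊Real.logb 2 (α / (1 - α))⌋ + 1) ≤ (h b - h c) / (h e - h c) ∧
      (h b - h c) / (h e - h c) ≤
        1 / (K⁻¹ * (1 / (1 + K)) ^ (Real.logb 2 (α / (1 - α)) + 1) + 1) :=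
  stmt_3_general t₀ t₁ c b e h K hK hmono hqs hcb hbe hJT α hα hαgt htilde
end

section
/- Let a ≤ b ≤ c ≤ d be real numbers with a < c and b < d. If the cross-ratio Cr(a,b,c,d) = (|a−b|·|c−d|)/(|a−c|·|d−b|) is at least 1/4, then |a−b| ≥ |b−c|/3 and |c−d| ≥ |b−c|/3. -/
/-- If `a ≤ b ≤ c ≤ d`, `a < c`, `b < d` and the cross-ratio
`Cr(a,b,c,d) = ((b−a)(d−c))/((c−a)(d−b)) ≥ 1/4`, then `b−a ≥ (c−b)/3` and `d−c ≥ (c−b)/3`. -/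
theorem stmt_5 (a b c d : ℝ) (hab : a ≤ b) (hbc : b ≤ c) (hcd : c ≤ d)
    (hac : a < c) (hbd : b < d)
    (hCr : ((b - a) * (d - c)) / ((c - a) * (d - b)) ≥ 1 / 4) :
    (c - b) / 3 ≤ b - a ∧ (c - b) / 3 ≤ d - c := by
  have h1 : (0:ℝ) < c - a := by linarith
  have h2 : (0:ℝ) < d - b := by linarith
  have hpos : (0:ℝ) < (c - a) * (d - b) := mul_pos h1 h2
  have key : 4 * ((b - a) * (d - c)) ≥ (c - a) * (d - b) := by
    have := (div_le_div_iff₀ (by norm_num) hpos).mp hCr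
    linarith
  constructor
  · nlinarith [mul_nonneg (sub_nonneg.mpr hab) (sub_nonneg.mpr hbc),
      mul_pos h2 h2, sq_nonneg (c - b)]
  · nlinarith [mul_nonneg (sub_nonneg.mpr hcd) (sub_nonneg.mpr hbc),
      mul_pos h1 h1, sq_nonneg (c - b)]
end

section
/- Let a ≤ b ≤ c ≤ d be real numbers with b < c, and suppose Cr(a,b,c,d) = ((b−a)(d−c))/((c−a)(d−b)) < δ for some 0 < δ < 1. Then min{(b−a)/(c−b), (d−c)/(c−b)} < √δ/(1−√δ). -/
/-- If `a ≤ b ≤ c ≤ d`, `b < c`, and `Cr(a,b,c,d) < δ` for some `0 < δ < 1`,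
then `min{(b−a)/(c−b), (d−c)/(c−b)} < √δ/(1−√δ)`. -/
theorem stmt_6 (a b c d δ : ℝ) (hab : a ≤ b) (hbc : b < c) (hcd : c ≤ d)
    (hδ0 : 0 < δ) (hδ1 : δ < 1)
    (hCr : ((b - a) * (d - c)) / ((c - a) * (d - b)) < δ) :
    min ((b - a) / (c - b)) ((d - c) / (c - b)) < Real.sqrt δ / (1 - Real.sqrt δ) := by
  set s := Real.sqrt δ with hs
  have hs0 : 0 < s := Real.sqrt_pos.mpr hδ0
  have hs1 : s < 1 := by
    have := Real.sqrt_lt_sqrt hδ0.le hδ1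
    simpa [Real.sqrt_one] using this
  have hssq : s * s = δ := Real.mul_self_sqrt hδ0.le
  have hcb : (0:ℝ) < c - b := sub_pos.mpr hbc
  by_contra h
  push_neg at h
  have h1 : s / (1 - s) ≤ (b - a) / (c - b) := le_trans h (min_le_left _ _)
  have h2 : s / (1 - s) ≤ (d - c) / (c - b) := le_trans h (min_le_right _ _)
  have h1s : (0:ℝ) < 1 - s := by linarith
  rw [div_le_div_iff₀ h1s hcb] at h1 h2
  -- h1 : s * (c - b) ≤ (b - a) * (1 - s)
  have ha : s * (c - a) ≤ b - a := by nlinarith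
  have hd : s * (d - b) ≤ d - c := by nlinarith
  have hca : (0:ℝ) < c - a := by linarith
  have hdb : (0:ℝ) < d - b := by linarith
  have hkey : δ * ((c - a) * (d - b)) ≤ (b - a) * (d - c) := by
    have hm := mul_le_mul ha hd (by positivity) (by linarith : (0:ℝ) ≤ b - a)
    calc δ * ((c - a) * (d - b)) = s * (c - a) * (s * (d - b)) := by rw [← hssq]; ring
      _ ≤ (b - a) * (d - c) := hm
  have : δ ≤ ((b - a) * (d - c)) / ((c - a) * (d - b)) :=
    (le_div_iff₀ (mul_pos hca hdb)).mpr (by linarith [hkey])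
  linarith
end

section
/- Let g : ℝ → ℝ be a strictly increasing continuous map with g(x+1) = g(x)+1 for all x, and suppose its rotation number ρ(g) satisfies: either ρ(g) is irrational, or ρ(g) = P/Q in lowest terms. Then for every x ∈ ℝ and every pair of integers p and q with |q| < Q (with Q = ∞ when ρ(g) is irrational), one has (g^q(x) − x − p)·(q·ρ(g) − p) > 0. -/
open Filter

/-!
Realise `g` as a `CircleDeg1Lift` `f` with translation number `ρ`. If `τ(fⁿ) = nρ` differs from
the integer `p`, then `fⁿ` moves every point `x` strictly to the same side of `x + p` as `nρ` lies
of `p`; negative iterates reduce to positive ones at the point `G q x`. It remains that `qρ ≠ p`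
for `0 < |q| < Q`: this is clear for irrational `ρ`, and for `ρ = P/Q` in lowest terms `qP = pQ`
would force `Q ∣ q`.
-/

namespace CircleDeg1Lift

theorem map_sub_sub_mul_translationNumber_sub_pos (f : CircleDeg1Lift) {p : ℤ}
    (hp : f.translationNumber ≠ p) (x : ℝ) :
    0 < (f x - x - p) * (f.translationNumber - p) := by
  rcases hp.lt_or_gt with hlt | hgt
  · have := f.map_lt_of_translationNumber_lt_int hlt x
    exact mul_pos_of_neg_of_neg (by linarith) (by linarith)
  · have := f.lt_map_of_int_lt_translationNumber hgt x
    exact mul_pos (by linarith) (by linarith)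

end CircleDeg1Lift

section IntIterates

variable {α : Type*} {g : α → α} {G : ℤ → α → α}

theorem apply_natCast_eq_iterate (hG0 : ∀ x, G 0 x = x)
    (hGsucc : ∀ (n : ℤ) (x : α), G (n + 1) x = g (G n x)) (n : ℕ) (x : α) :
    G n x = g^[n] x := by
  induction n with
  | zero => exact hG0 x
  | succ n ih => rw [Nat.cast_succ, hGsucc, ih, Function.iterate_succ_apply']

theorem iterate_apply_neg_natCast (hG0 : ∀ x, G 0 x = x)
    (hGsucc : ∀ (n : ℤ) (x : α), G (n + 1) x = g (G n x)) (n : ℕ) (x : α) :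
    g^[n] (G (-n) x) = x := by
  induction n with
  | zero => exact hG0 x
  | succ n ih =>
    have hstep := hGsucc (-(n + 1 : ℕ)) x
    rw [show (-(n + 1 : ℕ) : ℤ) + 1 = -n by push_cast; ring] at hstep
    rw [Function.iterate_succ_apply, ← hstep, ih]

end IntIterates

theorem intCast_mul_div_ne_intCast {P : ℤ} {q₀ : ℕ} (hcop : Nat.Coprime P.natAbs q₀) {q : ℤ}
    (hq : q ≠ 0) (hqlt : q.natAbs < q₀) (p : ℤ) : (q : ℝ) * (P / q₀) ≠ p := by
  intro h
  have hq₀ : (q₀ : ℝ) ≠ 0 := Nat.cast_ne_zero.2 (by omega)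
  have hmul : q * P = p * q₀ := by
    rw [mul_div_assoc', div_eq_iff hq₀] at h
    exact_mod_cast h
  have hcop' : IsCoprime (q₀ : ℤ) P := by
    rw [Int.isCoprime_iff_gcd_eq_one, Int.gcd_comm]
    exact hcop
  have hdvd : (q₀ : ℤ) ∣ q := hcop'.dvd_of_dvd_mul_right ⟨p, by rw [hmul, mul_comm]⟩
  have := Int.natAbs_le_of_dvd_ne_zero hdvd hq
  omega

theorem stmt_7_general (g : ℝ → ℝ) (hmono : StrictMono g)
    (hper : ∀ x, g (x + 1) = g x + 1)
    (G : ℤ → ℝ → ℝ) (hG0 : ∀ x, G 0 x = x) (hGsucc : ∀ (n : ℤ) (x : ℝ), G (n + 1) x = g (G n x))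
    (ρ : ℝ) (hρ : ∀ x, Tendsto (fun n : ℕ => (G (n : ℤ) x - x) / (n : ℝ)) atTop (nhds ρ))
    (Q : ℕ∞)
    (hQ : (Q = ⊤ ∧ Irrational ρ) ∨
      (∃ P : ℤ, ∃ q0 : ℕ, 0 < q0 ∧ Q = (q0 : ℕ∞) ∧ ρ = (P : ℝ) / (q0 : ℝ) ∧
        Nat.Coprime P.natAbs q0)) :
    ∀ (x : ℝ) (p q : ℤ), q ≠ 0 → (q.natAbs : ℕ∞) < Q →
      (G q x - x - (p : ℝ)) * ((q : ℝ) * ρ - (p : ℝ)) > 0 := by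
  intro x p q hq hqQ
  let f : CircleDeg1Lift := ⟨⟨g, hmono.monotone⟩, hper⟩
  have hGf (n : ℕ) (y : ℝ) : G n y = (f ^ n) y := by
    rw [CircleDeg1Lift.coe_pow]; exact apply_natCast_eq_iterate hG0 hGsucc n y
  have hτ : f.translationNumber = ρ :=
    f.translationNumber_eq_of_tendsto₀ <| by simpa [hGf, CircleDeg1Lift.coe_pow] using hρ 0
  have hτpow (n : ℕ) : (f ^ n).translationNumber = n * ρ := by
    rw [CircleDeg1Lift.translationNumber_pow, hτ]
  have hne : (q : ℝ) * ρ ≠ p := by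
    rcases hQ with ⟨-, hirr⟩ | ⟨P, q₀, -, rfl, rfl, hcop⟩
    · exact (hirr.intCast_mul hq).ne_int p
    · exact intCast_mul_div_ne_intCast hcop hq (by exact_mod_cast hqQ) p
  obtain ⟨n, rfl | rfl⟩ := q.eq_nat_or_neg
  · have := (f ^ n).map_sub_sub_mul_translationNumber_sub_pos (p := p) (by rwa [hτpow]) x
    rwa [hτpow, ← hGf] at this
  · have hx : (f ^ n) (G (-n) x) = x := by
      rw [CircleDeg1Lift.coe_pow]; exact iterate_apply_neg_natCast hG0 hGsucc n x
    have hτne : (f ^ n).translationNumber ≠ (-p : ℤ) := by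
      rw [hτpow]; push_cast at hne ⊢; contrapose! hne; linarith
    have := (f ^ n).map_sub_sub_mul_translationNumber_sub_pos hτne (G (-n) x)
    rw [hτpow, hx] at this
    convert this using 1
    push_cast
    ring

/-- Lemma 1.1 of Świątek: Let `g` be a strictly increasing continuous lift of a
degree-1 circle homeomorphism, with iterates `G : ℤ → ℝ → ℝ` (`G 0 = id`, `G (n+1) = g ∘ G n`)
and rotation number `ρ` (the limit of `(gⁿ(x) − x)/n`).  If `ρ` is irrational set `Q = ∞`,
and if `ρ = P/Q` in lowest terms take that `Q`.  Then for every `x` and every pair of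
integers `p`, `q` with `q ≠ 0` and `|q| < Q`, one has `(G q x − x − p)(qρ − p) > 0`. -/
theorem stmt_7 (g : ℝ → ℝ) (hmono : StrictMono g) (hcont : Continuous g)
    (hper : ∀ x, g (x + 1) = g x + 1)
    (G : ℤ → ℝ → ℝ) (hG0 : ∀ x, G 0 x = x) (hGsucc : ∀ (n : ℤ) (x : ℝ), G (n + 1) x = g (G n x))
    (ρ : ℝ) (hρ : ∀ x, Tendsto (fun n : ℕ => (G (n : ℤ) x - x) / (n : ℝ)) atTop (nhds ρ))
    (Q : ℕ∞)
    (hQ : (Q = ⊤ ∧ Irrational ρ) ∨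
      (∃ P : ℤ, ∃ q0 : ℕ, 0 < q0 ∧ Q = (q0 : ℕ∞) ∧ ρ = (P : ℝ) / (q0 : ℝ) ∧
        Nat.Coprime P.natAbs q0)) :
    ∀ (x : ℝ) (p q : ℤ), q ≠ 0 → (q.natAbs : ℕ∞) < Q →
      (G q x - x - (p : ℝ)) * ((q : ℝ) * ρ - (p : ℝ)) > 0 :=
  stmt_7_general g hmono hper G hG0 hGsucc ρ hρ Q hQ
end

section
/- Suppose g : ℝ → ℝ is strictly increasing with g(x)−x being 1-periodic, and g satisfies the cross-ratio inequality with respect to a cross-ratio modulus χ with bound Q (i.e. for every allowable configuration of quadruples (a_i,b_i,c_i,d_i), i=1,…,n, the product of χ(g(a_i),g(b_i),g(c_i),g(d_i))/χ(a_i,b_i,c_i,d_i) is at most Q). Then for any configuration of quadruples with intersection number k (every point of ℝ is contained, modulo 1, in at most k of the intervals (a_i,d_i)), the product ∏_{i=1}^n χ(g(a_i),g(b_i),g(c_i),g(d_i))/χ(a_i,b_i,c_i,d_i) is at most Q^{2k}. -/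
/-!
Translate each interval `(aᵢ, dᵢ)` by an integer so that its left end lies in `[0, 1)`. Those
that then reach past `1` all contain `0` modulo 1, so there are at most `k` of them; they get
distinct colours. The others lie in `[0, 1]`, where disjointness modulo 1 is plain disjointness,
and they have load at most `k` on the line, so they are `k`-colourable: adding them in order of
left end, the earlier intervals a new one meets all contain a point just right of its left end,
so there are at most `k - 1` of them. Each of the `2k` colour classes is an allowable
configuration, of distortion at most `Q`. For `k = 0` every interval is a point, where `χ`
vanishes.
-/

open Finset Set

section IntervalColoring

variable {ι α : Type*} [LinearOrder α] [DenselyOrdered α] {A D : ι → α}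

lemma exists_mem_Ioo_of_not_disjoint_of_le {s : Finset ι} (hs : s.Nonempty) {i₀ : ι}
    (hle : ∀ j ∈ s, A j ≤ A i₀)
    (hmeet : ∀ j ∈ s, ¬Disjoint (Ioo (A j) (D j)) (Ioo (A i₀) (D i₀))) :
    ∃ x ∈ Ioo (A i₀) (D i₀), ∀ j ∈ s, x ∈ Ioo (A j) (D j) := by
  have hD : ∀ j ∈ s, A i₀ < D j ∧ A i₀ < D i₀ := fun j hj => by
    obtain ⟨y, ⟨-, hyj⟩, hyi₀, hyi₀'⟩ := Set.not_disjoint_iff.mp (hmeet j hj)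
    exact ⟨hyi₀.trans hyj, hyi₀.trans hyi₀'⟩
  obtain ⟨j, hj⟩ := hs
  obtain ⟨x, hx, hxD⟩ := exists_between
    (lt_min (hD j hj).2 ((lt_inf'_iff ⟨j, hj⟩).2 fun j hj => (hD j hj).1))
  exact ⟨x, ⟨hx, hxD.trans_le (min_le_left _ _)⟩, fun j hj =>
    ⟨(hle j hj).trans_lt hx, hxD.trans_le ((min_le_right _ _).trans (inf'_le _ hj))⟩⟩

theorem exists_coloring_pairwise_disjoint_Ioo {k : ℕ} (hk : 0 < k) (T : Finset ι)
    (hload : ∀ x, #{i ∈ T | x ∈ Ioo (A i) (D i)} ≤ k) :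
    ∃ f : ι → Fin k, (T : Set ι).Pairwise fun i j =>
      f i = f j → Disjoint (Ioo (A i) (D i)) (Ioo (A j) (D j)) := by
  classical
  induction T using Finset.induction_on_max_value A with
  | empty => exact ⟨fun _ => ⟨0, hk⟩, by simp⟩
  | insert i₀ T hi₀ hmax ih =>
  obtain ⟨f, hf⟩ := ih fun x =>
    (Finset.card_le_card (filter_subset_filter _ (subset_insert _ _))).trans (hload x)
  set C := {j ∈ T | ¬Disjoint (Ioo (A j) (D j)) (Ioo (A i₀) (D i₀))}
  have hC : #C < k := by
    rcases C.eq_empty_or_nonempty with hCe | hCne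
    · simpa [hCe]
    obtain ⟨x, hx, hxC⟩ := exists_mem_Ioo_of_not_disjoint_of_le hCne
      (fun j hj => hmax j (mem_filter.1 hj).1) (fun j hj => (mem_filter.1 hj).2)
    have hsub : insert i₀ C ⊆ {i ∈ insert i₀ T | x ∈ Ioo (A i) (D i)} := by
      intro j hj
      rcases mem_insert.1 hj with rfl | hj
      · exact mem_filter.2 ⟨mem_insert_self _ _, hx⟩
      · exact mem_filter.2 ⟨mem_insert_of_mem (mem_filter.1 hj).1, hxC j hj⟩
    have hcard := (Finset.card_le_card hsub).trans (hload x)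
    rw [card_insert_of_notMem fun h => hi₀ (mem_filter.1 h).1] at hcard
    exact hcard
  obtain ⟨c, -, hc⟩ := exists_mem_notMem_of_card_lt_card
    (s := C.image f) (t := univ) (by simpa using card_image_le.trans_lt hC)
  have hfree : ∀ j ∈ T, f j = c → Disjoint (Ioo (A j) (D j)) (Ioo (A i₀) (D i₀)) := by
    intro j hj hjc
    by_contra hmeet
    exact hc (hjc ▸ mem_image_of_mem f (mem_filter.2 ⟨hj, hmeet⟩))
  have hne : ∀ j ∈ T, j ≠ i₀ := fun j hj h => hi₀ (h ▸ hj)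
  refine ⟨Function.update f i₀ c, ?_⟩
  rw [coe_insert]
  refine Set.Pairwise.insert_of_notMem hi₀ (fun i hi j hj hij => ?_) fun j hj => ?_
  · rw [Function.update_of_ne (hne i hi), Function.update_of_ne (hne j hj)]
    exact hf hi hj hij
  · rw [Function.update_self, Function.update_of_ne (hne j hj)]
    exact ⟨fun h => (hfree j hj h.symm).symm, hfree j hj⟩

end IntervalColoring

section ModOne

def DisjointModOne (a d a' d' : ℝ) : Prop :=
  ∀ m : ℤ, Disjoint (Ioo a d) (Ioo (a' + m) (d' + m))

lemma disjointModOne_of_disjoint {a d a' d' : ℝ} (ha : 0 ≤ a) (hd : d ≤ 1) (ha' : 0 ≤ a')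
    (hd' : d' ≤ 1) (h : Disjoint (Ioo a d) (Ioo a' d')) : DisjointModOne a d a' d' := by
  intro m
  rcases (by omega : m ≤ -1 ∨ m = 0 ∨ 1 ≤ m) with hm | rfl | hm
  · have hm : (m : ℝ) ≤ -1 := by exact_mod_cast hm
    exact Set.disjoint_left.2 fun x hx hx' => by linarith [hx.1, hx'.2]
  · simpa using h
  · have hm : (1 : ℝ) ≤ m := by exact_mod_cast hm
    exact Set.disjoint_left.2 fun x hx hx' => by linarith [hx.2, hx'.1]

lemma DisjointModOne.of_sub_int {a d a' d' : ℝ} {p q : ℤ}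
    (h : DisjointModOne (a - p) (d - p) (a' - q) (d' - q)) : DisjointModOne a d a' d' := by
  intro m
  refine Set.disjoint_left.2 fun x hx hx' => Set.disjoint_left.1 (h (m + q - p))
    (show x - (p : ℝ) ∈ _ from ⟨by linarith [hx.1], by linarith [hx.2]⟩) ⟨?_, ?_⟩ <;>
    push_cast <;> linarith [hx'.1, hx'.2]

variable {ι : Type*} [Fintype ι]

lemma le_of_forall_card_mem_Ioo_add_int_le_zero {a d : ι → ℝ}
    (hload : ∀ x : ℝ, Nat.card {i // ∃ m : ℤ, x + m ∈ Ioo (a i) (d i)} ≤ 0) (i : ι) :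
    d i ≤ a i := by
  by_contra! had
  obtain ⟨x, hx⟩ := exists_between had
  have : Nonempty {j // ∃ m : ℤ, x + m ∈ Ioo (a j) (d j)} := ⟨⟨i, 0, by simpa using hx⟩⟩
  exact (Nat.card_pos.trans_le (hload x)).false

theorem exists_coloring_disjointModOne {k : ℕ} (hk : 0 < k) (a d : ι → ℝ)
    (hload : ∀ x : ℝ, Nat.card {i // ∃ m : ℤ, x + m ∈ Ioo (a i) (d i)} ≤ k) :
    ∃ F : ι → Fin k ⊕ Fin k,
      Pairwise fun i j => F i = F j → DisjointModOne (a i) (d i) (a j) (d j) := by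
  classical
  replace hload : ∀ x : ℝ, #{i | ∃ m : ℤ, x + m ∈ Ioo (a i) (d i)} ≤ k := fun x => by
    simpa only [Nat.card_eq_fintype_card, Fintype.card_subtype] using hload x
  set A : ι → ℝ := fun i => a i - ⌊a i⌋
  set D : ι → ℝ := fun i => d i - ⌊a i⌋
  have hA : ∀ i, 0 ≤ A i ∧ A i < 1 := fun i =>
    ⟨by linarith [Int.floor_le (a i)], by linarith [Int.lt_floor_add_one (a i)]⟩
  set S : Finset ι := {i | 1 < D i}
  have hS : #S ≤ k := by
    refine (Finset.card_le_card fun i hi => ?_).trans (hload 0)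
    refine mem_filter.2 ⟨mem_univ i, ⌊a i⌋ + 1, ?_, ?_⟩
    · push_cast; linarith [(hA i).2]
    · push_cast; linarith [(mem_filter.1 hi).2]
  obtain ⟨e⟩ : Nonempty (S ↪ Fin k) :=
    Function.Embedding.nonempty_of_card_le (by simpa using hS)
  obtain ⟨f, hf⟩ := exists_coloring_pairwise_disjoint_Ioo (A := A) (D := D) hk Sᶜ fun x => by
    refine (Finset.card_le_card fun i hi => ?_).trans (hload x)
    obtain ⟨-, hxA, hxD⟩ := mem_filter.1 hi
    exact mem_filter.2 ⟨mem_univ i, ⌊a i⌋, by linarith, by linarith⟩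
  refine ⟨fun i => if h : i ∈ S then .inr (e ⟨i, h⟩) else .inl (f i), fun i j hij hF => ?_⟩
  by_cases hi : i ∈ S <;> by_cases hj : j ∈ S <;> simp only [hi, hj, dite_true, dite_false,
    Sum.inr.injEq, Sum.inl.injEq, reduceCtorEq] at hF
  · exact absurd (congrArg Subtype.val (e.injective hF)) hij
  have hDi : D i ≤ 1 := not_lt.1 fun h => hi (mem_filter.2 ⟨mem_univ i, h⟩)
  have hDj : D j ≤ 1 := not_lt.1 fun h => hj (mem_filter.2 ⟨mem_univ j, h⟩)
  exact DisjointModOne.of_sub_int (p := ⌊a i⌋) (q := ⌊a j⌋) <| disjointModOne_of_disjoint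
    (hA i).1 hDi (hA j).1 hDj (hf (mem_compl.2 hi) (mem_compl.2 hj) hij hF)

end ModOne

lemma prod_le_pow_card_of_prod_fiber_le {ι κ : Type*} [Fintype ι] [Fintype κ] [DecidableEq κ]
    {u : ι → ℝ} (hu : ∀ i, 0 ≤ u i) (F : ι → κ) {Q : ℝ}
    (hF : ∀ c, ∏ i : {i // F i = c}, u i ≤ Q) : ∏ i, u i ≤ Q ^ Fintype.card κ := by
  rw [← Fintype.prod_fiberwise F u, ← Finset.card_univ, ← prod_const]
  exact prod_le_prod (fun c _ => prod_nonneg fun i _ => hu i) fun c _ => hF c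

section CrossRatio

noncomputable def crossRatio (a b c d : ℝ) : ℝ := (b - a) * (d - c) / ((c - a) * (d - b))

noncomputable def distortion (χ : ℝ → ℝ → ℝ → ℝ → ℝ) (g : ℝ → ℝ) (a b c d : ℝ) : ℝ :=
  χ (g a) (g b) (g c) (g d) / χ a b c d

def SatisfiesCrossRatioIneq (χ : ℝ → ℝ → ℝ → ℝ → ℝ) (g : ℝ → ℝ) (Q : ℝ) : Prop :=
  ∀ (n : ℕ) (a b c d : Fin n → ℝ), (∀ i, a i ≤ b i ∧ b i ≤ c i ∧ c i ≤ d i ∧ d i - a i < 1) →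
    (∀ i j, i ≠ j → DisjointModOne (a i) (d i) (a j) (d j)) →
    ∏ i, distortion χ g (a i) (b i) (c i) (d i) ≤ Q

variable {χ : ℝ → ℝ → ℝ → ℝ → ℝ} {g : ℝ → ℝ}

lemma distortion_nonneg (hχ : ∀ a b c d : ℝ, a ≤ b → b ≤ c → c ≤ d → 0 ≤ χ a b c d)
    (hg : Monotone g) {a b c d : ℝ} (hab : a ≤ b) (hbc : b ≤ c) (hcd : c ≤ d) :
    0 ≤ distortion χ g a b c d :=
  div_nonneg (hχ _ _ _ _ (hg hab) (hg hbc) (hg hcd)) (hχ _ _ _ _ hab hbc hcd)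

/-- `crossRatio x x x x` is the junk value `0 / 0 = 0`, so `χ` vanishes on point quadruples. -/
lemma modulus_apply_self_eq_zero (x : ℝ) (h₀ : 0 ≤ χ x x x x)
    (hsmall : ∀ ε : ℝ, 0 < ε → ∃ δ : ℝ, 0 < δ ∧ ∀ a b c d : ℝ, a ≤ b → b ≤ c → c ≤ d →
      crossRatio a b c d < δ → χ a b c d < ε) :
    χ x x x x = 0 := by
  refine h₀.antisymm' (not_lt.1 fun hpos => ?_)
  obtain ⟨δ, hδ, hχδ⟩ := hsmall _ hpos
  exact (hχδ x x x x le_rfl le_rfl le_rfl (by simpa [crossRatio] using hδ)).false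

lemma distortion_eq_zero_of_right_le_left
    (hχ : ∀ a b c d : ℝ, a ≤ b → b ≤ c → c ≤ d → 0 ≤ χ a b c d)
    (hsmall : ∀ ε : ℝ, 0 < ε → ∃ δ : ℝ, 0 < δ ∧ ∀ a b c d : ℝ, a ≤ b → b ≤ c → c ≤ d →
      crossRatio a b c d < δ → χ a b c d < ε)
    {a b c d : ℝ} (hab : a ≤ b) (hbc : b ≤ c) (hcd : c ≤ d) (hda : d ≤ a) :
    distortion χ g a b c d = 0 := by
  obtain ⟨rfl, rfl, rfl⟩ : a = b ∧ b = c ∧ c = d := by refine ⟨?_, ?_, ?_⟩ <;> linarith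
  rw [distortion, modulus_apply_self_eq_zero a (hχ a a a a le_rfl le_rfl le_rfl) hsmall,
    div_zero]

lemma SatisfiesCrossRatioIneq.prod_le {Q : ℝ} (h : SatisfiesCrossRatioIneq χ g Q)
    {ι : Type*} [Fintype ι] (a b c d : ι → ℝ)
    (hcfg : ∀ i, a i ≤ b i ∧ b i ≤ c i ∧ c i ≤ d i ∧ d i - a i < 1)
    (hdisj : Pairwise fun i j => DisjointModOne (a i) (d i) (a j) (d j)) :
    ∏ i, distortion χ g (a i) (b i) (c i) (d i) ≤ Q := by
  let e := (Fintype.equivFin ι).symm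
  rw [← e.prod_comp]
  exact h _ (a ∘ e) (b ∘ e) (c ∘ e) (d ∘ e) (fun t => hcfg _) fun t u htu =>
    hdisj (e.injective.ne htu)

end CrossRatio

theorem stmt_18_general (χ : ℝ → ℝ → ℝ → ℝ → ℝ) (g : ℝ → ℝ) (Q : ℝ)
    (hg : StrictMono g)
    (hχnonneg : ∀ a b c d : ℝ, a ≤ b → b ≤ c → c ≤ d → 0 ≤ χ a b c d)
    (hχsmall : ∀ ε : ℝ, 0 < ε → ∃ δ : ℝ, 0 < δ ∧ ∀ a b c d : ℝ, a ≤ b → b ≤ c → c ≤ d →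
      ((b - a) * (d - c)) / ((c - a) * (d - b)) < δ → χ a b c d < ε)
    (hcri : ∀ (n : ℕ) (a b c d : Fin n → ℝ),
      (∀ i, a i ≤ b i ∧ b i ≤ c i ∧ c i ≤ d i ∧ d i - a i < 1) →
      (∀ i j, i ≠ j → ∀ m : ℤ,
        Disjoint (Set.Ioo (a i) (d i)) (Set.Ioo (a j + (m : ℝ)) (d j + (m : ℝ)))) →
      (Finset.univ.prod fun i =>
        χ (g (a i)) (g (b i)) (g (c i)) (g (d i)) / χ (a i) (b i) (c i) (d i)) ≤ Q) :
    ∀ (k n : ℕ) (a b c d : Fin n → ℝ),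
      (∀ i, a i ≤ b i ∧ b i ≤ c i ∧ c i ≤ d i ∧ d i - a i < 1) →
      (∀ x : ℝ, Nat.card {i : Fin n // ∃ m : ℤ, x + (m : ℝ) ∈ Set.Ioo (a i) (d i)} ≤ k) →
      (Finset.univ.prod fun i =>
        χ (g (a i)) (g (b i)) (g (c i)) (g (d i)) / χ (a i) (b i) (c i) (d i)) ≤ Q ^ (2 * k) := by
  intro k n a b c d hcfg hload
  change ∏ i, distortion χ g (a i) (b i) (c i) (d i) ≤ Q ^ (2 * k)
  rcases k.eq_zero_or_pos with rfl | hk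
  · rcases isEmpty_or_nonempty (Fin n) with hn | ⟨⟨i⟩⟩
    · simp
    obtain ⟨hab, hbc, hcd, -⟩ := hcfg i
    rw [prod_eq_zero (mem_univ i) (distortion_eq_zero_of_right_le_left hχnonneg hχsmall
      hab hbc hcd (le_of_forall_card_mem_Ioo_add_int_le_zero hload i))]
    simp
  obtain ⟨F, hF⟩ := exists_coloring_disjointModOne hk a d hload
  have hcri' : SatisfiesCrossRatioIneq χ g Q := hcri
  calc ∏ i, distortion χ g (a i) (b i) (c i) (d i)
      ≤ Q ^ Fintype.card (Fin k ⊕ Fin k) :=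
        prod_le_pow_card_of_prod_fiber_le
          (fun i => distortion_nonneg hχnonneg hg.monotone (hcfg i).1 (hcfg i).2.1 (hcfg i).2.2.1) F
          fun _ => hcri'.prod_le _ _ _ _ (fun i => hcfg i) fun i j hij =>
            hF (Subtype.coe_injective.ne hij) (i.2.trans j.2.symm)
    _ = Q ^ (2 * k) := by simp [two_mul]

/-- Lemma 1.1 of Świątek: Suppose `g : ℝ → ℝ` is strictly increasing with
`g(x) − x` 1-periodic, `χ` is a cross-ratio modulus, and `g` satisfies the cross-ratio
inequality with respect to `χ` with bound `Q` (over allowable configurations: the intervals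
`(a_i, d_i)` are pairwise disjoint modulo 1 and `d_i − a_i < 1`).  Then for any configuration
of quadruples with intersection number at most `k` (every real `x` lies, modulo 1, in at most
`k` of the intervals `(a_i, d_i)`), the product of the distortions of `χ` is at most `Q^{2k}`. -/
theorem stmt_18 (χ : ℝ → ℝ → ℝ → ℝ → ℝ) (g : ℝ → ℝ) (Q : ℝ) (hQ : 1 ≤ Q)
    (hg : StrictMono g) (hgper : ∀ x, g (x + 1) = g x + 1)
    (hχnonneg : ∀ a b c d : ℝ, a ≤ b → b ≤ c → c ≤ d → 0 ≤ χ a b c d)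
    (hχlow : ∃ Cst : ℝ, 0 < Cst ∧ ∀ a b c d : ℝ, a ≤ b → b ≤ c → c ≤ d →
      ((b - a) * (d - c)) / ((c - a) * (d - b)) ≥ 1 / 4 → Cst ≤ χ a b c d)
    (hχsmall : ∀ ε : ℝ, 0 < ε → ∃ δ : ℝ, 0 < δ ∧ ∀ a b c d : ℝ, a ≤ b → b ≤ c → c ≤ d →
      ((b - a) * (d - c)) / ((c - a) * (d - b)) < δ → χ a b c d < ε)
    (hcri : ∀ (n : ℕ) (a b c d : Fin n → ℝ),
      (∀ i, a i ≤ b i ∧ b i ≤ c i ∧ c i ≤ d i ∧ d i - a i < 1) →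
      (∀ i j, i ≠ j → ∀ m : ℤ,
        Disjoint (Set.Ioo (a i) (d i)) (Set.Ioo (a j + (m : ℝ)) (d j + (m : ℝ)))) →
      (Finset.univ.prod fun i =>
        χ (g (a i)) (g (b i)) (g (c i)) (g (d i)) / χ (a i) (b i) (c i) (d i)) ≤ Q) :
    ∀ (k n : ℕ) (a b c d : Fin n → ℝ),
      (∀ i, a i ≤ b i ∧ b i ≤ c i ∧ c i ≤ d i ∧ d i - a i < 1) →
      (∀ x : ℝ, Nat.card {i : Fin n // ∃ m : ℤ, x + (m : ℝ) ∈ Set.Ioo (a i) (d i)} ≤ k) →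
      (Finset.univ.prod fun i =>
        χ (g (a i)) (g (b i)) (g (c i)) (g (d i)) / χ (a i) (b i) (c i) (d i)) ≤ Q ^ (2 * k) :=
  stmt_18_general χ g Q hg hχnonneg hχsmall hcri
end
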